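/- Let K be an O-cocomplete O-category with a chosen O-colimit φ_Φ : Φ ⇒ colim Φ for each ω-chain Φ of embeddings. Then the assignment sending Φ to colim Φ and sending a natural transformation η : Φ ⇒ Γ (in K) to ⊔_n γ_n ∘ η_n ∘ φ_n^p : colim Φ → colim Γ (where φ and γ are the chosen colimiting cocones) defines a functor, and this functor is locally continuous: it preserves directed suprema of natural transformations, where natural transformations are ordered component-wise. -/

import Mathlib

open CategoryTheory OmegaCompletePartialOrder

universe v u

class OHom (K : Type u) [Category.{v} K] where
  homOrder : ∀ X Y : K, OmegaCompletePartialOrder (X ⟶ Y)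

attribute [instance] OHom.homOrder

/-- An O-category: a category enriched in dcpos with continuous composition. -/
class OCat (K : Type u) [Category.{v} K] extends OHom K where
  comp_mono : ∀ {X Y Z : K} {f f' : X ⟶ Y} {g g' : Y ⟶ Z},
    f ≤ f' → g ≤ g' → f ≫ g ≤ f' ≫ g'
  comp_cont_left : ∀ {X Y Z : K} (g : Y ⟶ Z) (c : Chain (X ⟶ Y))
    (hm : Monotone fun n => c n ≫ g),
    ωSup c ≫ g = ωSup ⟨fun n => c n ≫ g, hm⟩
  comp_cont_right : ∀ {X Y Z : K} (f : X ⟶ Y) (c : Chain (Y ⟶ Z))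
    (hm : Monotone fun n => f ≫ c n),
    f ≫ ωSup c = ωSup ⟨fun n => f ≫ c n, hm⟩

/-- An ω-chain of embeddings in an O-category. -/
structure ChainE (K : Type u) [Category.{v} K] [OCat K] where
  obj : ℕ → K
  e : ∀ n, obj n ⟶ obj (n + 1)
  p : ∀ n, obj (n + 1) ⟶ obj n
  ep₁ : ∀ n, e n ≫ p n = 𝟙 (obj n)
  ep₂ : ∀ n, p n ≫ e n ≤ 𝟙 (obj (n + 1))

/-- An O-colimit of an ω-chain of embeddings: a cocone of embeddings whose
leg/projection composites form an ascending chain with supremum the identity. -/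
structure OColim {K : Type u} [Category.{v} K] [OCat K] (Φ : ChainE K) where
  pt : K
  leg : ∀ n, Φ.obj n ⟶ pt
  legp : ∀ n, pt ⟶ Φ.obj n
  cocone : ∀ n, Φ.e n ≫ leg (n + 1) = leg n
  ep₁ : ∀ n, leg n ≫ legp n = 𝟙 (Φ.obj n)
  ep₂ : ∀ n, legp n ≫ leg n ≤ 𝟙 pt
  mono : Monotone fun n => legp n ≫ leg n
  sup : ωSup ⟨fun n => legp n ≫ leg n, mono⟩ = 𝟙 pt

/-! Every morphism of the functor is a supremum in a hom-dcpo, so both claims reduce to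
manipulating suprema. Functoriality on composites holds because `γₙ^p ∘ γₙ = id` cancels the
middle of `(δₙ ∘ ρₙ ∘ γₙ^p) ∘ (γₙ ∘ ηₙ ∘ φₙ^p)`, and composition in `K` is jointly continuous,
so the supremum of diagonal composites is the composite of suprema. Local continuity is the
interchange of the two suprema over `k` and `n` after pushing `⊔ₖ` through the composition. -/

theorem ωSup_rows_eq_ωSup_cols {α : Type*} [OmegaCompletePartialOrder α] (x : ℕ → ℕ → α)
    (rows cols : Chain α) (hrows : ∀ n, IsLUB (Set.range (x n)) (rows n))
    (hcols : ∀ k, IsLUB (Set.range (x · k)) (cols k)) :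
    ωSup rows = ωSup cols := by
  apply le_antisymm
  · refine ωSup_le _ _ fun n => (hrows n).2 ?_
    rintro _ ⟨k, rfl⟩
    exact le_ωSup_of_le k ((hcols k).1 ⟨n, rfl⟩)
  · refine ωSup_le _ _ fun k => (hcols k).2 ?_
    rintro _ ⟨n, rfl⟩
    exact le_ωSup_of_le n ((hrows n).1 ⟨k, rfl⟩)

namespace OCat

variable {K : Type u} [Category.{v} K] [OCat K] {X Y Z W : K}

theorem comp_le_comp_left (f : X ⟶ Y) {g g' : Y ⟶ Z} (h : g ≤ g') : f ≫ g ≤ f ≫ g' :=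
  comp_mono le_rfl h

theorem comp_le_comp_right {f f' : X ⟶ Y} (h : f ≤ f') (g : Y ⟶ Z) : f ≫ g ≤ f' ≫ g :=
  comp_mono h le_rfl

def compChain (a : Chain (X ⟶ Y)) (b : Chain (Y ⟶ Z)) : Chain (X ⟶ Z) :=
  ⟨fun n => a n ≫ b n, fun _ _ h => comp_mono (OrderHomClass.mono a h) (OrderHomClass.mono b h)⟩

def whiskerChain (f : X ⟶ Y) (c : Chain (Y ⟶ Z)) (g : Z ⟶ W) : Chain (X ⟶ W) :=
  ⟨fun k => f ≫ c k ≫ g,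
    fun _ _ h => comp_le_comp_left f (comp_le_comp_right (OrderHomClass.mono c h) g)⟩

theorem comp_ωSup_comp (f : X ⟶ Y) (c : Chain (Y ⟶ Z)) (g : Z ⟶ W) :
    f ≫ ωSup c ≫ g = ωSup (whiskerChain f c g) := by
  rw [comp_cont_left g c fun _ _ h => comp_le_comp_right (OrderHomClass.mono c h) g,
    comp_cont_right]
  rfl

theorem ωSup_comp_ωSup (a : Chain (X ⟶ Y)) (b : Chain (Y ⟶ Z)) :
    ωSup a ≫ ωSup b = ωSup (compChain a b) := by
  apply le_antisymm
  · rw [comp_cont_left _ a fun _ _ h => comp_le_comp_right (OrderHomClass.mono a h) _]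
    refine ωSup_le _ _ fun n => ?_
    show a n ≫ ωSup b ≤ _
    rw [comp_cont_right _ b fun _ _ h => comp_le_comp_left _ (OrderHomClass.mono b h)]
    -- the diagonal composites `a n ≫ b n` are cofinal among all `a n ≫ b m`
    refine ωSup_le _ _ fun m => le_ωSup_of_le (max n m) ?_
    exact comp_mono (OrderHomClass.mono a (le_max_left n m))
      (OrderHomClass.mono b (le_max_right n m))
  · exact ωSup_le _ _ fun n => comp_mono (le_ωSup a n) (le_ωSup b n)

end OCat

open OCat

theorem OColim.leg_comp_legp_comp {K : Type u} [Category.{v} K] [OCat K] {Φ : ChainE K}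
    (c : OColim Φ) (n : ℕ) {Y : K} (f : Φ.obj n ⟶ Y) : c.leg n ≫ c.legp n ≫ f = f := by
  rw [← Category.assoc, c.ep₁, Category.id_comp]

theorem colim_functor_locally_continuous {K : Type u} [Category.{v} K] [OCat K]
    (Φ Γ Δ : ChainE K) (cΦ : OColim Φ) (cΓ : OColim Γ) (cΔ : OColim Δ)
    (η : ∀ n, Φ.obj n ⟶ Γ.obj n)
    (ρ : ∀ n, Γ.obj n ⟶ Δ.obj n) :
    -- identities are preserved
    (∀ hm : Monotone fun n => cΦ.legp n ≫ 𝟙 (Φ.obj n) ≫ cΦ.leg n,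
      ωSup ⟨fun n => cΦ.legp n ≫ 𝟙 (Φ.obj n) ≫ cΦ.leg n, hm⟩ = 𝟙 cΦ.pt) ∧
    -- composition is preserved
    (∀ (h₁ : Monotone fun n => cΦ.legp n ≫ η n ≫ cΓ.leg n)
       (h₂ : Monotone fun n => cΓ.legp n ≫ ρ n ≫ cΔ.leg n)
       (h₃ : Monotone fun n => cΦ.legp n ≫ (η n ≫ ρ n) ≫ cΔ.leg n),
      ωSup ⟨fun n => cΦ.legp n ≫ (η n ≫ ρ n) ≫ cΔ.leg n, h₃⟩
        = ωSup ⟨fun n => cΦ.legp n ≫ η n ≫ cΓ.leg n, h₁⟩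
            ≫ ωSup ⟨fun n => cΓ.legp n ≫ ρ n ≫ cΔ.leg n, h₂⟩) ∧
    -- local continuity: component-wise suprema of natural transformations are preserved
    (∀ (s : ℕ → ∀ n, Φ.obj n ⟶ Γ.obj n)
       (hnat : ∀ k n, Φ.e n ≫ s k (n + 1) = s k n ≫ Γ.e n)
       (hs : ∀ n, Monotone fun k => s k n)
       (h₄ : ∀ k, Monotone fun n => cΦ.legp n ≫ s k n ≫ cΓ.leg n)
       (h₅ : Monotone fun n => cΦ.legp n ≫ ωSup ⟨fun k => s k n, hs n⟩ ≫ cΓ.leg n)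
       (h₆ : Monotone fun k => ωSup ⟨fun n => cΦ.legp n ≫ s k n ≫ cΓ.leg n, h₄ k⟩),
      ωSup ⟨fun n => cΦ.legp n ≫ ωSup ⟨fun k => s k n, hs n⟩ ≫ cΓ.leg n, h₅⟩
        = ωSup ⟨fun k => ωSup ⟨fun n => cΦ.legp n ≫ s k n ≫ cΓ.leg n, h₄ k⟩, h₆⟩) := by
  refine ⟨fun _ => ?_, fun _ _ _ => ?_, fun s _ hs h₄ _ _ => ?_⟩
  · simpa only [Category.id_comp] using cΦ.sup
  · rw [ωSup_comp_ωSup]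
    congr 1
    ext n
    show cΦ.legp n ≫ (η n ≫ ρ n) ≫ cΔ.leg n
      = (cΦ.legp n ≫ η n ≫ cΓ.leg n) ≫ cΓ.legp n ≫ ρ n ≫ cΔ.leg n
    simp only [Category.assoc, cΓ.leg_comp_legp_comp]
  · refine ωSup_rows_eq_ωSup_cols (fun n k => cΦ.legp n ≫ s k n ≫ cΓ.leg n) _ _ (fun n => ?_)
      fun k => isLUB_range_ωSup (⟨fun n => cΦ.legp n ≫ s k n ≫ cΓ.leg n, h₄ k⟩ : Chain _)
    show IsLUB _ (cΦ.legp n ≫ ωSup ⟨fun k => s k n, hs n⟩ ≫ cΓ.leg n)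
    rw [comp_ωSup_comp]
    exact isLUB_range_ωSup (whiskerChain (cΦ.legp n) ⟨fun k => s k n, hs n⟩ (cΓ.leg n))
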